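/- arXiv:1302.5877 — 2 statements merged into one kernel-verified Lean document; each statement's English description precedes it below -/
import Mathlib

section
/- Let Y : [0,T] × ℝ² → ℝ² be smooth with det(I + ∇Y(0,·)) = 1 on ℝ². If for all t, ∇·Y(t,·) = ∂₁Y²∂₂Y¹ - ∂₁Y¹∂₂Y² pointwise, then det(I + ∇Y(t,·)) = 1 for all t ∈ [0,T], and moreover ∇_Y·Y_t = 0 for all t. -/
noncomputable section

/-- Spatial partial derivative `∂₁` of a function `f(t, y₁, y₂)`. -/
def D1 (f : ℝ → ℝ → ℝ → ℝ) : ℝ → ℝ → ℝ → ℝ :=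
  fun t y1 y2 => deriv (fun s => f t s y2) y1

/-- Spatial partial derivative `∂₂` of a function `f(t, y₁, y₂)`. -/
def D2 (f : ℝ → ℝ → ℝ → ℝ) : ℝ → ℝ → ℝ → ℝ :=
  fun t y1 y2 => deriv (fun s => f t y1 s) y2

/-- Time derivative `∂ₜ` of a function `f(t, y₁, y₂)`. -/
def Dt (f : ℝ → ℝ → ℝ → ℝ) : ℝ → ℝ → ℝ → ℝ :=
  fun t y1 y2 => deriv (fun s => f s y1 y2) t

namespace ConstraintAux

/-- derivative of the time-line through a smooth function -/
lemma hasDerivT {g : ℝ × ℝ × ℝ → ℝ} (hg : ContDiff ℝ (⊤ : ℕ∞) g) (t y1 y2 : ℝ) :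
    HasDerivAt (fun s => g (s, y1, y2)) (fderiv ℝ g (t, y1, y2) (1, 0, 0)) t := by
  have hc : HasDerivAt (fun s : ℝ => ((s, y1, y2) : ℝ × ℝ × ℝ)) ((1 : ℝ), (0 : ℝ), (0 : ℝ)) t :=
    (hasDerivAt_id t).prodMk ((hasDerivAt_const t y1).prodMk (hasDerivAt_const t y2))
  exact ((hg.differentiable (by simp) _).hasFDerivAt).comp_hasDerivAt t hc

lemma hasDeriv1 {g : ℝ × ℝ × ℝ → ℝ} (hg : ContDiff ℝ (⊤ : ℕ∞) g) (t y1 y2 : ℝ) :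
    HasDerivAt (fun s => g (t, s, y2)) (fderiv ℝ g (t, y1, y2) (0, 1, 0)) y1 := by
  have hc : HasDerivAt (fun s : ℝ => ((t, s, y2) : ℝ × ℝ × ℝ)) ((0 : ℝ), (1 : ℝ), (0 : ℝ)) y1 :=
    (hasDerivAt_const y1 t).prodMk ((hasDerivAt_id y1).prodMk (hasDerivAt_const y1 y2))
  exact ((hg.differentiable (by simp) _).hasFDerivAt).comp_hasDerivAt y1 hc

lemma hasDeriv2 {g : ℝ × ℝ × ℝ → ℝ} (hg : ContDiff ℝ (⊤ : ℕ∞) g) (t y1 y2 : ℝ) :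
    HasDerivAt (fun s => g (t, y1, s)) (fderiv ℝ g (t, y1, y2) (0, 0, 1)) y2 := by
  have hc : HasDerivAt (fun s : ℝ => ((t, y1, s) : ℝ × ℝ × ℝ)) ((0 : ℝ), (0 : ℝ), (1 : ℝ)) y2 :=
    (hasDerivAt_const y2 t).prodMk ((hasDerivAt_const y2 y1).prodMk (hasDerivAt_id y2))
  exact ((hg.differentiable (by simp) _).hasFDerivAt).comp_hasDerivAt y2 hc

/-- smoothness of a directional derivative -/
lemma fd_smooth {g : ℝ × ℝ × ℝ → ℝ} (hg : ContDiff ℝ (⊤ : ℕ∞) g) (v : ℝ × ℝ × ℝ) :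
    ContDiff ℝ (⊤ : ℕ∞) (fun p => fderiv ℝ g p v) := by
  have h := (contDiff_infty_iff_fderiv.mp hg).2
  exact (ContinuousLinearMap.apply ℝ ℝ v).contDiff.comp h

/-- Clairaut: swap of directional derivatives -/
lemma swap_fderiv {g : ℝ × ℝ × ℝ → ℝ} (hg : ContDiff ℝ (⊤ : ℕ∞) g) (v w p : ℝ × ℝ × ℝ) :
    fderiv ℝ (fun q => fderiv ℝ g q v) p w = fderiv ℝ (fun q => fderiv ℝ g q w) p v := by
  have hfd : ContDiff ℝ (⊤ : ℕ∞) (fderiv ℝ g) := (contDiff_infty_iff_fderiv.mp hg).2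
  have hdf : HasFDerivAt (fderiv ℝ g) (fderiv ℝ (fderiv ℝ g) p) p :=
    ((hfd.differentiable (by simp)) p).hasFDerivAt
  have hv : HasFDerivAt (fun q => fderiv ℝ g q v)
      ((ContinuousLinearMap.apply ℝ ℝ v).comp (fderiv ℝ (fderiv ℝ g) p)) p :=
    (ContinuousLinearMap.apply ℝ ℝ v).hasFDerivAt.comp p hdf
  have hw : HasFDerivAt (fun q => fderiv ℝ g q w)
      ((ContinuousLinearMap.apply ℝ ℝ w).comp (fderiv ℝ (fderiv ℝ g) p)) p :=
    (ContinuousLinearMap.apply ℝ ℝ w).hasFDerivAt.comp p hdf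
  rw [hv.fderiv, hw.fderiv]
  simp only [ContinuousLinearMap.coe_comp', Function.comp_apply,
    ContinuousLinearMap.apply_apply]
  exact second_derivative_symmetric
    (fun y => ((hg.differentiable (by simp)) y).hasFDerivAt) hdf w v

end ConstraintAux

open ConstraintAux in
/-- Let `Y : [0,T] × ℝ² → ℝ²` be smooth with `det (I + ∇Y(0,·)) = 1` on `ℝ²`.
If for all `t`, `∇·Y(t,·) = ∂₁Y²∂₂Y¹ - ∂₁Y¹∂₂Y²` pointwise, then
`det (I + ∇Y(t,·)) = 1` for all `t ∈ [0,T]`, and moreover `∇_Y·Y_t = 0` for all such `t`,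
where `∇_Y·Y_t = Σᵢⱼ (𝒜_Y)ⱼᵢ ∂ⱼ(∂ₜYⁱ)` with `𝒜_Y` the adjugate of `I + ∇Y`. -/
theorem constraint_implies_det_one_and_divY_Yt (T : ℝ) (hT : 0 < T)
    (Y1 Y2 : ℝ → ℝ → ℝ → ℝ)
    (hY1 : ContDiff ℝ (⊤ : ℕ∞) (fun p : ℝ × ℝ × ℝ => Y1 p.1 p.2.1 p.2.2))
    (hY2 : ContDiff ℝ (⊤ : ℕ∞) (fun p : ℝ × ℝ × ℝ => Y2 p.1 p.2.1 p.2.2))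
    (hdet0 : ∀ y1 y2 : ℝ,
      (1 + D1 Y1 0 y1 y2) * (1 + D2 Y2 0 y1 y2) - D2 Y1 0 y1 y2 * D1 Y2 0 y1 y2 = 1)
    (hconstraint : ∀ t ∈ Set.Icc (0 : ℝ) T, ∀ y1 y2 : ℝ,
      D1 Y1 t y1 y2 + D2 Y2 t y1 y2 =
        D1 Y2 t y1 y2 * D2 Y1 t y1 y2 - D1 Y1 t y1 y2 * D2 Y2 t y1 y2) :
    ∀ t ∈ Set.Icc (0 : ℝ) T, ∀ y1 y2 : ℝ,
      ((1 + D1 Y1 t y1 y2) * (1 + D2 Y2 t y1 y2)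
          - D2 Y1 t y1 y2 * D1 Y2 t y1 y2 = 1) ∧
      ((1 + D2 Y2 t y1 y2) * D1 (Dt Y1) t y1 y2
          - D1 Y2 t y1 y2 * D2 (Dt Y1) t y1 y2
          - D2 Y1 t y1 y2 * D1 (Dt Y2) t y1 y2
          + (1 + D1 Y1 t y1 y2) * D2 (Dt Y2) t y1 y2 = 0) := by
  classical
  have hY1' : ContDiff ℝ (⊤ : ℕ∞) (fun p : ℝ × ℝ × ℝ => Y1 p.1 p.2.1 p.2.2) := hY1.of_le (by simp)
  have hY2' : ContDiff ℝ (⊤ : ℕ∞) (fun p : ℝ × ℝ × ℝ => Y2 p.1 p.2.1 p.2.2) := hY2.of_le (by simp)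
  set g1 : ℝ × ℝ × ℝ → ℝ := fun p => Y1 p.1 p.2.1 p.2.2 with hg1def
  set g2 : ℝ × ℝ × ℝ → ℝ := fun p => Y2 p.1 p.2.1 p.2.2 with hg2def
  set e0 : ℝ × ℝ × ℝ := (1, 0, 0)
  set e1 : ℝ × ℝ × ℝ := (0, 1, 0)
  set e2 : ℝ × ℝ × ℝ := (0, 0, 1)
  -- component functions
  set A : ℝ × ℝ × ℝ → ℝ := fun p => fderiv ℝ g1 p e1 with hAdef
  set B : ℝ × ℝ × ℝ → ℝ := fun p => fderiv ℝ g1 p e2 with hBdef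
  set C : ℝ × ℝ × ℝ → ℝ := fun p => fderiv ℝ g2 p e1 with hCdef
  set D : ℝ × ℝ × ℝ → ℝ := fun p => fderiv ℝ g2 p e2 with hDdef
  have hA : ContDiff ℝ (⊤ : ℕ∞) A := fd_smooth hY1' e1
  have hB : ContDiff ℝ (⊤ : ℕ∞) B := fd_smooth hY1' e2
  have hC : ContDiff ℝ (⊤ : ℕ∞) C := fd_smooth hY2' e1
  have hD : ContDiff ℝ (⊤ : ℕ∞) D := fd_smooth hY2' e2
  -- identification of the first-order partials
  have hD1Y1 : ∀ t y1 y2 : ℝ, D1 Y1 t y1 y2 = A (t, y1, y2) := fun t y1 y2 =>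
    (hasDeriv1 hY1' t y1 y2).deriv
  have hD2Y1 : ∀ t y1 y2 : ℝ, D2 Y1 t y1 y2 = B (t, y1, y2) := fun t y1 y2 =>
    (hasDeriv2 hY1' t y1 y2).deriv
  have hD1Y2 : ∀ t y1 y2 : ℝ, D1 Y2 t y1 y2 = C (t, y1, y2) := fun t y1 y2 =>
    (hasDeriv1 hY2' t y1 y2).deriv
  have hD2Y2 : ∀ t y1 y2 : ℝ, D2 Y2 t y1 y2 = D (t, y1, y2) := fun t y1 y2 =>
    (hasDeriv2 hY2' t y1 y2).deriv
  -- time derivatives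
  have hDtY1 : ∀ t y1 y2 : ℝ, Dt Y1 t y1 y2 = fderiv ℝ g1 (t, y1, y2) e0 := fun t y1 y2 =>
    (hasDerivT hY1' t y1 y2).deriv
  have hDtY2 : ∀ t y1 y2 : ℝ, Dt Y2 t y1 y2 = fderiv ℝ g2 (t, y1, y2) e0 := fun t y1 y2 =>
    (hasDerivT hY2' t y1 y2).deriv
  have hAt1 : ContDiff ℝ (⊤ : ℕ∞) (fun p => fderiv ℝ g1 p e0) := fd_smooth hY1' e0
  have hAt2 : ContDiff ℝ (⊤ : ℕ∞) (fun p => fderiv ℝ g2 p e0) := fd_smooth hY2' e0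
  -- identification of the mixed partials appearing in the goal
  have hmix1 : ∀ t y1 y2 : ℝ, D1 (Dt Y1) t y1 y2 = fderiv ℝ A (t, y1, y2) e0 := by
    intro t y1 y2
    have : D1 (Dt Y1) t y1 y2 = deriv (fun s => fderiv ℝ g1 (t, s, y2) e0) y1 := by
      unfold D1
      congr 1
      funext s
      exact hDtY1 t s y2
    rw [this, (hasDeriv1 hAt1 t y1 y2).deriv, swap_fderiv hY1' e0 e1 (t, y1, y2)]
  have hmix2 : ∀ t y1 y2 : ℝ, D2 (Dt Y1) t y1 y2 = fderiv ℝ B (t, y1, y2) e0 := by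
    intro t y1 y2
    have : D2 (Dt Y1) t y1 y2 = deriv (fun s => fderiv ℝ g1 (t, y1, s) e0) y2 := by
      unfold D2
      congr 1
      funext s
      exact hDtY1 t y1 s
    rw [this, (hasDeriv2 hAt1 t y1 y2).deriv, swap_fderiv hY1' e0 e2 (t, y1, y2)]
  have hmix3 : ∀ t y1 y2 : ℝ, D1 (Dt Y2) t y1 y2 = fderiv ℝ C (t, y1, y2) e0 := by
    intro t y1 y2
    have : D1 (Dt Y2) t y1 y2 = deriv (fun s => fderiv ℝ g2 (t, s, y2) e0) y1 := by
      unfold D1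
      congr 1
      funext s
      exact hDtY2 t s y2
    rw [this, (hasDeriv1 hAt2 t y1 y2).deriv, swap_fderiv hY2' e0 e1 (t, y1, y2)]
  have hmix4 : ∀ t y1 y2 : ℝ, D2 (Dt Y2) t y1 y2 = fderiv ℝ D (t, y1, y2) e0 := by
    intro t y1 y2
    have : D2 (Dt Y2) t y1 y2 = deriv (fun s => fderiv ℝ g2 (t, y1, s) e0) y2 := by
      unfold D2
      congr 1
      funext s
      exact hDtY2 t y1 s
    rw [this, (hasDeriv2 hAt2 t y1 y2).deriv, swap_fderiv hY2' e0 e2 (t, y1, y2)]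
  intro t ht y1 y2
  have hdet : ∀ s ∈ Set.Icc (0 : ℝ) T,
      (1 + D1 Y1 s y1 y2) * (1 + D2 Y2 s y1 y2) - D2 Y1 s y1 y2 * D1 Y2 s y1 y2 = 1 := by
    intro s hs
    linear_combination hconstraint s hs y1 y2
  refine ⟨hdet t ht, ?_⟩
  -- the function h(s) = det(I + ∇Y(s, y)) along the time line
  set h : ℝ → ℝ := fun s =>
    (1 + A (s, y1, y2)) * (1 + D (s, y1, y2)) - B (s, y1, y2) * C (s, y1, y2) with hhdef
  have hline : ∀ (φ : (ℝ × ℝ × ℝ) → ℝ), ContDiff ℝ (⊤ : ℕ∞) φ →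
      ContDiff ℝ (⊤ : ℕ∞) (fun s : ℝ => φ (s, y1, y2)) := by
    intro φ hφ
    exact hφ.comp (contDiff_id.prodMk (contDiff_const.prodMk contDiff_const))
  have hhsm : ContDiff ℝ (⊤ : ℕ∞) h :=
    (((contDiff_const.add (hline A hA)).mul (contDiff_const.add (hline D hD))).sub
      ((hline B hB).mul (hline C hC)))
  -- h = 1 on [0, T]
  have hval : ∀ s ∈ Set.Icc (0 : ℝ) T, h s = 1 := by
    intro s hs
    have := hdet s hs
    rw [hD1Y1, hD2Y2, hD2Y1, hD1Y2] at this
    simpa [hhdef] using this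
  -- deriv h = 0 on the open interval, hence on the closed one by continuity
  have hderiv0 : ∀ s ∈ Set.Icc (0 : ℝ) T, deriv h s = 0 := by
    have hopen : ∀ s ∈ Set.Ioo (0 : ℝ) T, deriv h s = 0 := by
      intro s hs
      have hev : h =ᶠ[nhds s] fun _ => (1 : ℝ) := by
        filter_upwards [Icc_mem_nhds hs.1 hs.2] with x hx using hval x hx
      rw [hev.deriv_eq, deriv_const]
    have hcont : Continuous (deriv h) := hhsm.continuous_deriv (by simp)
    have hEq : Set.EqOn (deriv h) (fun _ => (0 : ℝ)) (Set.Ioo 0 T) := fun s hs => hopen s hs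
    have hcl : Set.EqOn (deriv h) (fun _ => (0 : ℝ)) (closure (Set.Ioo 0 T)) :=
      hEq.closure hcont continuous_const
    intro s hs
    have : s ∈ closure (Set.Ioo (0 : ℝ) T) := by
      rw [closure_Ioo hT.ne]
      exact hs
    exact hcl this
  -- compute deriv h at t by the product rule
  have hA' := hasDerivT hA t y1 y2
  have hB' := hasDerivT hB t y1 y2
  have hC' := hasDerivT hC t y1 y2
  have hD' := hasDerivT hD t y1 y2
  have hh : HasDerivAt h
      ((0 + fderiv ℝ A (t, y1, y2) e0) * (1 + D (t, y1, y2)) +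
        (1 + A (t, y1, y2)) * (0 + fderiv ℝ D (t, y1, y2) e0) -
        (fderiv ℝ B (t, y1, y2) e0 * C (t, y1, y2) +
          B (t, y1, y2) * fderiv ℝ C (t, y1, y2) e0)) t := by
    exact (((hasDerivAt_const t (1 : ℝ)).add hA').mul
      ((hasDerivAt_const t (1 : ℝ)).add hD')).sub (hB'.mul hC')
  have hkey := hh.deriv
  rw [hderiv0 t ht] at hkey
  rw [hD1Y1, hD2Y2, hD2Y1, hD1Y2, hmix1, hmix2, hmix3, hmix4]
  linarith [hkey]
end
end

section
/- Let ψ₀, ψ̃₀ be C¹ functions on ℝ² with ‖∇ψ₀‖_{L^∞} + ‖∇ψ̃₀‖_{L^∞} ≤ ε₀ sufficiently small, and suppose the matrix U₀ with rows (1+∂₂ψ₀, ∂₂ψ̃₀) and (-∂₁ψ₀, 1-∂₁ψ̃₀) satisfies det U₀ = 1. Then there exists a map Y₀ = (Y₀¹, Y₀²) : ℝ² → ℝ² such that Y₀¹(y) = ψ̃₀(y + Y₀(y)) and Y₀²(y) = -ψ₀(y + Y₀(y)), and the map X₀(y) = y + Y₀(y) satisfies U₀∘X₀ = I + ∇Y₀,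 with gradient given explicitly by ∂₁Y₀¹ = (∂₂ψ₀)∘X₀, ∂₂Y₀¹ = (∂₂ψ̃₀)∘X₀, ∂₁Y₀² = -(∂₁ψ₀)∘X₀, ∂₂Y₀² = -(∂₁ψ̃₀)∘X₀. -/
noncomputable section

abbrev E2 := EuclideanSpace ℝ (Fin 2)

/-- Partial derivative `∂ᵢ f` of a scalar function on `ℝ²` (`∂₁ = pd 0`, `∂₂ = pd 1`). -/
def pd (i : Fin 2) (f : E2 → ℝ) (y : E2) : ℝ :=
  fderiv ℝ f y (EuclideanSpace.single i 1)

namespace InitialFlowAux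

lemma e2_decomp (h : E2) :
    h = h 0 • (EuclideanSpace.single (0 : Fin 2) (1 : ℝ))
      + h 1 • (EuclideanSpace.single (1 : Fin 2) (1 : ℝ)) := by
  ext i
  fin_cases i <;>
    simp [EuclideanSpace.single_apply]

lemma clm_expand (L : E2 →L[ℝ] ℝ) (h : E2) :
    L h = L (EuclideanSpace.single 0 1) * h 0 + L (EuclideanSpace.single 1 1) * h 1 := by
  conv_lhs => rw [e2_decomp h]
  rw [map_add, map_smul, map_smul]
  simp [smul_eq_mul]
  ring

lemma e2_norm_eq (h : E2) : ‖h‖ = Real.sqrt (h 0 ^ 2 + h 1 ^ 2) := by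
  rw [EuclideanSpace.norm_eq, Fin.sum_univ_two]
  norm_num [Real.norm_eq_abs, sq_abs]

lemma abs_coord_le (h : E2) (i : Fin 2) : |h i| ≤ ‖h‖ := by
  have h01 : i = 0 ∨ i = 1 := by omega
  have h0 : ∀ t : ℝ, |t| = Real.sqrt (t ^ 2) := fun t => (Real.sqrt_sq_eq_abs t).symm
  rcases h01 with rfl | rfl <;>
    · rw [e2_norm_eq, h0]
      exact Real.sqrt_le_sqrt (by nlinarith [sq_nonneg (h 0), sq_nonneg (h 1)])

end InitialFlowAux

set_option maxHeartbeats 1000000 in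
open InitialFlowAux in
/-- **Existence of the initial Lagrangian flow map (Lemma 2.2).** -/
theorem initial_flow_map_exists :
    ∃ ε₀ > (0 : ℝ), ∀ ψ₀ ψt₀ : E2 → ℝ,
      ContDiff ℝ 1 ψ₀ → ContDiff ℝ 1 ψt₀ →
      (∀ x : E2, |pd 0 ψ₀ x| + |pd 1 ψ₀ x| + |pd 0 ψt₀ x| + |pd 1 ψt₀ x| ≤ ε₀) →
      (∀ x : E2,
        (1 + pd 1 ψ₀ x) * (1 - pd 0 ψt₀ x) + pd 1 ψt₀ x * pd 0 ψ₀ x = 1) →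
      ∃ Y₀ : E2 → E2, Differentiable ℝ Y₀ ∧
        (∀ y : E2,
          Y₀ y 0 = ψt₀ (y + Y₀ y) ∧
          Y₀ y 1 = -ψ₀ (y + Y₀ y) ∧
          pd 0 (fun z => Y₀ z 0) y = pd 1 ψ₀ (y + Y₀ y) ∧
          pd 1 (fun z => Y₀ z 0) y = pd 1 ψt₀ (y + Y₀ y) ∧
          pd 0 (fun z => Y₀ z 1) y = -pd 0 ψ₀ (y + Y₀ y) ∧
          pd 1 (fun z => Y₀ z 1) y = -pd 0 ψt₀ (y + Y₀ y)) := by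
  refine ⟨1/2, by norm_num, ?_⟩
  intro ψ₀ ψt₀ hψ hψt hsmall hdet
  have hdψ : Differentiable ℝ ψ₀ := hψ.differentiable one_ne_zero
  have hdψt : Differentiable ℝ ψt₀ := hψt.differentiable one_ne_zero
  set e0 : E2 := EuclideanSpace.single (0 : Fin 2) (1 : ℝ) with he0
  set e1 : E2 := EuclideanSpace.single (1 : Fin 2) (1 : ℝ) with he1
  -- the perturbation map
  set v : E2 → E2 := fun x => ψt₀ x • e0 + (-ψ₀ x) • e1 with hv_def
  set Dv : E2 → (E2 →L[ℝ] E2) := fun x =>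
    (fderiv ℝ ψt₀ x).smulRight e0 + (-(fderiv ℝ ψ₀ x)).smulRight e1 with hDv_def
  have hv : ∀ x, HasFDerivAt v (Dv x) x := by
    intro x
    exact ((hdψt x).hasFDerivAt.smul_const e0).add
      (((hdψ x).hasFDerivAt.neg).smul_const e1)
  -- components of v
  have hv0 : ∀ x, v x 0 = ψt₀ x := by
    intro x
    simp [hv_def, he0, he1, EuclideanSpace.single_apply]
  have hv1 : ∀ x, v x 1 = -ψ₀ x := by
    intro x
    simp [hv_def, he0, he1, EuclideanSpace.single_apply]
  -- expansion of scalar derivatives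
  have hexp : ∀ (ψ : E2 → ℝ) (x h : E2),
      fderiv ℝ ψ x h = pd 0 ψ x * h 0 + pd 1 ψ x * h 1 := by
    intro ψ x h
    exact clm_expand (fderiv ℝ ψ x) h
  -- norm bound on Dv
  have hDvnorm : ∀ x, ‖Dv x‖ ≤ 1/2 := by
    intro x
    apply ContinuousLinearMap.opNorm_le_bound _ (by norm_num)
    intro h
    have h1 : Dv x h = (fderiv ℝ ψt₀ x h) • e0 + (-(fderiv ℝ ψ₀ x h)) • e1 := by
      simp [hDv_def]
    have hne0 : ‖e0‖ = 1 := by simp [he0, EuclideanSpace.norm_single]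
    have hne1 : ‖e1‖ = 1 := by simp [he1, EuclideanSpace.norm_single]
    have hb : ‖Dv x h‖ ≤ |fderiv ℝ ψt₀ x h| + |fderiv ℝ ψ₀ x h| := by
      rw [h1]
      calc ‖(fderiv ℝ ψt₀ x h) • e0 + (-(fderiv ℝ ψ₀ x h)) • e1‖
          ≤ ‖(fderiv ℝ ψt₀ x h) • e0‖ + ‖(-(fderiv ℝ ψ₀ x h)) • e1‖ := norm_add_le _ _
        _ = |fderiv ℝ ψt₀ x h| + |fderiv ℝ ψ₀ x h| := by
            rw [norm_smul, norm_smul, hne0, hne1]; simp [Real.norm_eq_abs]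
    have habs : ∀ ψ : E2 → ℝ,
        |fderiv ℝ ψ x h| ≤ (|pd 0 ψ x| + |pd 1 ψ x|) * ‖h‖ := by
      intro ψ
      rw [hexp]
      calc |pd 0 ψ x * h 0 + pd 1 ψ x * h 1|
          ≤ |pd 0 ψ x * h 0| + |pd 1 ψ x * h 1| := abs_add_le _ _
        _ = |pd 0 ψ x| * |h 0| + |pd 1 ψ x| * |h 1| := by rw [abs_mul, abs_mul]
        _ ≤ |pd 0 ψ x| * ‖h‖ + |pd 1 ψ x| * ‖h‖ := by
            gcongr <;> [exact abs_coord_le h 0; exact abs_coord_le h 1]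
        _ = (|pd 0 ψ x| + |pd 1 ψ x|) * ‖h‖ := by ring
    have := hsmall x
    have hnn : (0:ℝ) ≤ ‖h‖ := norm_nonneg _
    nlinarith [habs ψ₀, habs ψt₀, abs_nonneg (pd 0 ψ₀ x), abs_nonneg (pd 1 ψ₀ x),
      abs_nonneg (pd 0 ψt₀ x), abs_nonneg (pd 1 ψt₀ x)]
  -- v is 1/2-Lipschitz
  have hvlip : ∀ u u' : E2, ‖v u - v u'‖ ≤ (1/2) * ‖u - u'‖ := by
    intro u u'
    apply Convex.norm_image_sub_le_of_norm_fderiv_le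
      (fun x _ => (hv x).differentiableAt)
      (fun x _ => by rw [(hv x).fderiv]; exact hDvnorm x)
      convex_univ (Set.mem_univ u') (Set.mem_univ u)
  -- fixed point construction
  have hT : ∀ y : E2, ContractingWith (1/2 : NNReal) (fun x => y + v x) := by
    intro y
    refine ⟨by rw [← NNReal.coe_lt_coe]; norm_num, LipschitzWith.of_dist_le_mul fun x x' => ?_⟩
    have : dist (y + v x) (y + v x') = ‖v x - v x'‖ := by
      rw [dist_eq_norm]; abel_nf
    rw [this, dist_eq_norm]
    have := hvlip x x'
    push_cast
    linarith
  set X : E2 → E2 := fun y => ContractingWith.fixedPoint (fun x => y + v x) (hT y) with hX_def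
  have hXfix : ∀ y, y + v (X y) = X y := fun y => (hT y).fixedPoint_isFixedPt
  -- X is Lipschitz hence continuous
  have hXlip : ∀ y y', ‖X y - X y'‖ ≤ 2 * ‖y - y'‖ := by
    intro y y'
    have h1 : X y - X y' = (y - y') + (v (X y) - v (X y')) := by
      conv_lhs => rw [← hXfix y, ← hXfix y']
      abel
    have h2 : ‖X y - X y'‖ ≤ ‖y - y'‖ + (1/2) * ‖X y - X y'‖ := by
      calc ‖X y - X y'‖ = ‖(y - y') + (v (X y) - v (X y'))‖ := by rw [h1]
        _ ≤ ‖y - y'‖ + ‖v (X y) - v (X y')‖ := norm_add_le _ _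
        _ ≤ ‖y - y'‖ + (1/2) * ‖X y - X y'‖ := by linarith [hvlip (X y) (X y')]
    linarith
  have hXcont : Continuous X := by
    apply LipschitzWith.continuous (K := 2)
    apply LipschitzWith.of_dist_le_mul
    intro y y'
    rw [dist_eq_norm, dist_eq_norm]
    have := hXlip y y'
    push_cast
    linarith
  -- the inverse-derivative candidate, at a point u = X y
  set pr0 : E2 →L[ℝ] ℝ := PiLp.proj 2 _ (0 : Fin 2) with hpr0
  set pr1 : E2 →L[ℝ] ℝ := PiLp.proj 2 _ (1 : Fin 2) with hpr1
  set A : E2 → (E2 →L[ℝ] E2) := fun u =>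
    ((1 + pd 1 ψ₀ u) • pr0 + pd 1 ψt₀ u • pr1).smulRight e0
      + ((-pd 0 ψ₀ u) • pr0 + (1 - pd 0 ψt₀ u) • pr1).smulRight e1 with hA_def
  have hA0 : ∀ u h, A u h 0 = (1 + pd 1 ψ₀ u) * h 0 + pd 1 ψt₀ u * h 1 := by
    intro u h
    simp [hA_def, he0, he1, hpr0, hpr1, EuclideanSpace.single_apply, smul_eq_mul]
  have hA1 : ∀ u h, A u h 1 = (-pd 0 ψ₀ u) * h 0 + (1 - pd 0 ψt₀ u) * h 1 := by
    intro u h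
    simp [hA_def, he0, he1, hpr0, hpr1, EuclideanSpace.single_apply, smul_eq_mul]
  set Dg : E2 → (E2 →L[ℝ] E2) := fun u => ContinuousLinearMap.id ℝ E2 - Dv u with hDg_def
  have hDg0 : ∀ u h, Dg u h 0 = h 0 - (pd 0 ψt₀ u * h 0 + pd 1 ψt₀ u * h 1) := by
    intro u h
    have : Dg u h = h - ((fderiv ℝ ψt₀ u h) • e0 + (-(fderiv ℝ ψ₀ u h)) • e1) := by
      simp [hDg_def, hDv_def]
    rw [this]
    simp [he0, he1, EuclideanSpace.single_apply, hexp ψt₀ u h]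
  have hDg1 : ∀ u h, Dg u h 1 = h 1 + (pd 0 ψ₀ u * h 0 + pd 1 ψ₀ u * h 1) := by
    intro u h
    have : Dg u h = h - ((fderiv ℝ ψt₀ u h) • e0 + (-(fderiv ℝ ψ₀ u h)) • e1) := by
      simp [hDg_def, hDv_def]
    rw [this]
    simp [he0, he1, EuclideanSpace.single_apply, hexp ψ₀ u h]
    ring
  have hinv1 : ∀ u h, A u (Dg u h) = h := by
    intro u h
    ext i
    have h01 : i = 0 ∨ i = 1 := by omega
    rcases h01 with rfl | rfl
    · rw [hA0, hDg0, hDg1]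
      linear_combination (h 0) * hdet u
    · rw [hA1, hDg0, hDg1]
      linear_combination (h 1) * hdet u
  have hinv2 : ∀ u h, Dg u (A u h) = h := by
    intro u h
    ext i
    have h01 : i = 0 ∨ i = 1 := by omega
    rcases h01 with rfl | rfl
    · rw [hDg0, hA0, hA1]
      linear_combination (h 0) * hdet u
    · rw [hDg1, hA0, hA1]
      linear_combination (h 1) * hdet u
  -- the derivative of X at y is A (X y)
  have hXderiv : ∀ y : E2, HasFDerivAt X (A (X y)) y := by
    intro y
    set eq : E2 ≃L[ℝ] E2 := ContinuousLinearEquiv.equivOfInverse (Dg (X y)) (A (X y))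
      (fun h => hinv1 (X y) h) (fun h => hinv2 (X y) h) with heq
    have hg : HasFDerivAt (fun x => x - v x) ((eq : E2 →L[ℝ] E2)) (X y) := by
      have : HasFDerivAt (fun x : E2 => x - v x) (Dg (X y)) (X y) :=
        (hasFDerivAt_id (X y)).sub (hv (X y))
      exact this
    have hfg : ∀ᶠ y' in nhds y, X y' - v (X y') = y' := by
      apply Filter.Eventually.of_forall
      intro y'
      exact sub_eq_of_eq_add (hXfix y').symm
    have := hg.of_local_left_inverse (hXcont.continuousAt) hfg
    have hsymm : ((eq.symm : E2 ≃L[ℝ] E2) : E2 →L[ℝ] E2) = A (X y) := by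
      rw [heq, ContinuousLinearEquiv.symm_equivOfInverse]
      rfl
    rwa [hsymm] at this
  -- derivative of Y₀
  set Y₀ : E2 → E2 := fun y => X y - y with hY_def
  have hYderiv : ∀ y : E2, HasFDerivAt Y₀ (A (X y) - ContinuousLinearMap.id ℝ E2) y := by
    intro y
    exact (hXderiv y).sub (hasFDerivAt_id y)
  have hXy : ∀ y : E2, y + Y₀ y = X y := by
    intro y
    show y + (X y - y) = X y
    rw [add_comm]
    exact sub_add_cancel (X y) y
  -- component derivatives
  have hcomp : ∀ (j : Fin 2) (y : E2),
      HasFDerivAt (fun z => Y₀ z j)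
        ((PiLp.proj 2 (fun _ : Fin 2 => ℝ) j).comp (A (X y) - ContinuousLinearMap.id ℝ E2)) y := by
    intro j y
    exact (PiLp.proj 2 (fun _ : Fin 2 => ℝ) j).hasFDerivAt.comp y (hYderiv y)
  have hpd : ∀ (i j : Fin 2) (y : E2),
      pd i (fun z => Y₀ z j) y
        = A (X y) (EuclideanSpace.single i 1) j - (EuclideanSpace.single i 1 : E2) j := by
    intro i j y
    rw [pd, (hcomp j y).fderiv]
    simp [ContinuousLinearMap.sub_apply]
  have hsingle : ∀ (i j : Fin 2),
      (EuclideanSpace.single i (1:ℝ) : E2) j = if j = i then 1 else 0 := by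
    intro i j; rw [EuclideanSpace.single_apply]
  refine ⟨Y₀, fun y => (hYderiv y).differentiableAt, fun y => ?_⟩
  have hYv : Y₀ y = v (X y) := by
    show X y - y = v (X y)
    exact (eq_sub_of_add_eq' (hXfix y)).symm
  refine ⟨?_, ?_, ?_, ?_, ?_, ?_⟩
  · rw [hXy, hYv, hv0]
  · rw [hXy, hYv, hv1]
  · rw [hXy, hpd 0 0 y, hA0]
    simp [hsingle]
  · rw [hXy, hpd 1 0 y, hA0]
    simp [hsingle]
  · rw [hXy, hpd 0 1 y, hA1]
    simp [hsingle]
  · rw [hXy, hpd 1 1 y, hA1]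
    simp [hsingle]
end
end
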